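/- Let e be a Hermite-Biehler function having no real zeros, let γ ∈ (0, π), and set ĕ(z) := −s_γ(z) − i·s₀(z). Then there exist positive constants r₁ and r₂ such that r₂·|e(z)| ≤ |ĕ(z)| ≤ r₁·|e(z)| for every z ∈ ℂ with Im z ≥ 0. -/

import Mathlib

open Complex ComplexConjugate Real

noncomputable section

/-- `e#(z) := conj (e (conj z))`. -/
def esharp (e : ℂ → ℂ) (z : ℂ) : ℂ := conj (e (conj z))

/-- An entire function `e` is of Hermite-Biehler class if it has no zeros in the open
upper half-plane and `|e(z)| > |e#(z)|` there. -/
def HermiteBiehler (e : ℂ → ℂ) : Prop :=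
  Differentiable ℂ e ∧ (∀ z : ℂ, 0 < z.im → e z ≠ 0) ∧
    ∀ z : ℂ, 0 < z.im → ‖esharp e z‖ < ‖e z‖

/-- `s_β(z) := (i/2) (e^{iβ} e(z) - e^{-iβ} e#(z))`. -/
def sfun (e : ℂ → ℂ) (β : ℝ) (z : ℂ) : ℂ :=
  (Complex.I / 2) * (Complex.exp (Complex.I * β) * e z
    - Complex.exp (-(Complex.I * β)) * esharp e z)

/-! On the closed upper half-plane `|e#| ≤ |e|`, so `ĕ = a e + b e#` is comparable to `e` as soon
as `|b| < |a|`; for the coefficients of `ĕ` one has `|a|² - |b|² = sin γ > 0`. -/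

section TwoTermBounds

variable {𝕜 E : Type*} [NormedField 𝕜] [SeminormedAddCommGroup E] [NormedSpace 𝕜 E]

theorem norm_smul_add_smul_le_of_norm_le (a b : 𝕜) {u v : E} (hvu : ‖v‖ ≤ ‖u‖) :
    ‖a • u + b • v‖ ≤ (‖a‖ + ‖b‖) * ‖u‖ :=
  calc ‖a • u + b • v‖ ≤ ‖a‖ * ‖u‖ + ‖b‖ * ‖v‖ := by
        simpa only [norm_smul] using norm_add_le (a • u) (b • v)
    _ ≤ (‖a‖ + ‖b‖) * ‖u‖ := by nlinarith [norm_nonneg b]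

theorem le_norm_smul_add_smul_of_norm_le (a b : 𝕜) {u v : E} (hvu : ‖v‖ ≤ ‖u‖) :
    (‖a‖ - ‖b‖) * ‖u‖ ≤ ‖a • u + b • v‖ :=
  calc (‖a‖ - ‖b‖) * ‖u‖ ≤ ‖a‖ * ‖u‖ - ‖b‖ * ‖v‖ := by nlinarith [norm_nonneg b]
    _ ≤ ‖a • u + b • v‖ := by
        simpa only [norm_smul] using norm_sub_le_norm_add (a • u) (b • v)

end TwoTermBounds

theorem HermiteBiehler.norm_esharp_le {e : ℂ → ℂ} (he : HermiteBiehler e) {z : ℂ}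
    (hz : 0 ≤ z.im) : ‖esharp e z‖ ≤ ‖e z‖ := by
  rcases hz.lt_or_eq with hz | hz
  · exact (he.2.2 z hz).le
  · rw [esharp, Complex.conj_eq_iff_im.mpr hz.symm, Complex.norm_conj]

theorem neg_sfun_sub_I_mul_sfun_zero (e : ℂ → ℂ) (γ : ℝ) (z : ℂ) :
    -sfun e γ z - I * sfun e 0 z =
      (1 - I * exp (I * γ)) / 2 * e z + (I * exp (-(I * γ)) - 1) / 2 * esharp e z := by
  simp only [sfun, ofReal_zero, mul_zero, neg_zero, Complex.exp_zero]
  ring_nf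
  simp only [I_sq]
  ring

theorem norm_sq_one_sub_I_mul_exp_div_two (γ : ℝ) :
    ‖(1 - I * exp (I * γ)) / 2‖ ^ 2 = (1 + Real.sin γ) / 2 := by
  rw [Complex.sq_norm, mul_comm I (γ : ℂ), exp_mul_I]
  simp [normSq_apply, ← ofReal_sin, ← ofReal_cos]
  nlinarith [Real.sin_sq_add_cos_sq γ]

theorem norm_sq_I_mul_exp_neg_sub_one_div_two (γ : ℝ) :
    ‖(I * exp (-(I * γ)) - 1) / 2‖ ^ 2 = (1 - Real.sin γ) / 2 := by
  rw [Complex.sq_norm, mul_comm I (γ : ℂ),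
    show -((γ : ℂ) * I) = ((-γ : ℝ) : ℂ) * I by push_cast; ring, exp_mul_I]
  simp [normSq_apply, ← ofReal_sin, ← ofReal_cos]
  nlinarith [Real.sin_sq_add_cos_sq γ]

theorem norm_I_mul_exp_neg_sub_one_lt {γ : ℝ} (hγ : 0 < Real.sin γ) :
    ‖(I * exp (-(I * γ)) - 1) / 2‖ < ‖(1 - I * exp (I * γ)) / 2‖ := by
  refine lt_of_pow_lt_pow_left₀ 2 (norm_nonneg _) ?_
  rw [norm_sq_one_sub_I_mul_exp_div_two, norm_sq_I_mul_exp_neg_sub_one_div_two]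
  linarith

theorem breve_two_sided_estimate_general
    (e : ℂ → ℂ) (he : HermiteBiehler e)
    (γ : ℝ) (hγ : γ ∈ Set.Ioo 0 π) :
    ∃ r₁ > (0 : ℝ), ∃ r₂ > (0 : ℝ), ∀ z : ℂ, 0 ≤ z.im →
      r₂ * ‖e z‖ ≤ ‖-sfun e γ z - Complex.I * sfun e 0 z‖ ∧
      ‖-sfun e γ z - Complex.I * sfun e 0 z‖ ≤ r₁ * ‖e z‖ := by
  set a : ℂ := (1 - I * exp (I * γ)) / 2
  set b : ℂ := (I * exp (-(I * γ)) - 1) / 2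
  have hba : ‖b‖ < ‖a‖ :=
    norm_I_mul_exp_neg_sub_one_lt (Real.sin_pos_of_pos_of_lt_pi hγ.1 hγ.2)
  refine ⟨‖a‖ + ‖b‖, by linarith [norm_nonneg b], ‖a‖ - ‖b‖, sub_pos.2 hba, fun z hz => ?_⟩
  have hsharp := he.norm_esharp_le hz
  rw [neg_sfun_sub_I_mul_sfun_zero]
  exact ⟨le_norm_smul_add_smul_of_norm_le a b hsharp,
    norm_smul_add_smul_le_of_norm_le a b hsharp⟩

/-- Lemma 3.5 (key estimate): `|ĕ|` and `|e|` are two-sidedly comparable on the closed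
upper half-plane, where `ĕ := -s_γ - i s₀`. -/
theorem breve_two_sided_estimate
    (e : ℂ → ℂ) (he : HermiteBiehler e) (heReal : ∀ x : ℝ, e x ≠ 0)
    (γ : ℝ) (hγ : γ ∈ Set.Ioo 0 π) :
    ∃ r₁ > (0 : ℝ), ∃ r₂ > (0 : ℝ), ∀ z : ℂ, 0 ≤ z.im →
      r₂ * ‖e z‖ ≤ ‖-sfun e γ z - Complex.I * sfun e 0 z‖ ∧
      ‖-sfun e γ z - Complex.I * sfun e 0 z‖ ≤ r₁ * ‖e z‖ :=
  breve_two_sided_estimate_general e he γ hγ
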